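/- Let φ : ℝ → ℂ be an even Schwartz function whose Fourier transform φ̂(y) = ∫_ℝ φ(x) e^{−2πixy} dx is supported inside [−1, 1]. Then ∫_ℝ φ(x) · (1 − sin(2πx)/(2πx)) dx = ∫_ℝ φ(x) dx − φ(0)/2, where the integrand's value at x = 0 is interpreted via sin(2πx)/(2πx) = 1 at x = 0. Equivalently, the symplectic density W_Sp(x) = 1 − sin(2πx)/(2πx) agrees with the distribution 1 − (1/2)δ_0 on such test functions. -/

import Mathlib

/-! The Fourier transform of the indicator of `[-a, a]` is `2a · sinc(2πax)`, and
`W_Sp(x) = 1 - sinc(2πx)`. By the multiplication formula `∫ φ · 𝓕g = ∫ 𝓕φ · g`, the integral of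
`φ(x) · 2 sinc(2πx)` equals the integral of `𝓕φ` over `[-1, 1]`; when `𝓕φ` is supported there,
this is `∫ 𝓕φ = φ(0)` by Fourier inversion at `0`. -/

open FourierTransform MeasureTheory Real

/-- The symplectic density `W_Sp(x) = 1 - sin(2πx)/(2πx)`, with the value at
`x = 0` interpreted via `sin(2πx)/(2πx) = 1` at `x = 0`. -/
noncomputable def WSp (x : ℝ) : ℝ :=
  if x = 0 then 0 else 1 - Real.sin (2 * π * x) / (2 * π * x)

section FourierMultiplication

variable {V : Type*} [NormedAddCommGroup V] [InnerProductSpace ℝ V] [MeasurableSpace V]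
  [BorelSpace V] [FiniteDimensional ℝ V]

theorem integral_fourier_mul_eq_integral_mul_fourier {f g : V → ℂ} (hf : Integrable f)
    (hg : Integrable g) : ∫ ξ, 𝓕 f ξ * g ξ = ∫ x, f x * 𝓕 g x := by
  have hflip : (innerₗ V).flip = innerₗ V := LinearMap.ext₂ real_inner_comm
  have := VectorFourier.integral_fourierIntegral_smul_eq_flip (L := innerₗ V)
    Real.continuous_fourierChar continuous_inner hf hg
  rwa [hflip] at this

theorem Continuous.integral_fourier_eq {f : V → ℂ}
    (hc : Continuous f) (hf : Integrable f) (hFf : Integrable (𝓕 f)) : ∫ ξ, 𝓕 f ξ = f 0 := by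
  simpa [Real.fourierInv_eq'] using congrFun (hc.fourierInv_fourier_eq hf hFf) 0

end FourierMultiplication

theorem fourier_indicator_Icc {a : ℝ} (ha : 0 ≤ a) (x : ℝ) :
    𝓕 ((Set.Icc (-a) a).indicator (1 : ℝ → ℂ)) x = (2 * a * sinc (2 * π * a * x) : ℝ) := by
  rw [Real.fourier_real_eq_integral_exp_smul, integral_congr_ae (g := (Set.Icc (-a) a).indicator
    fun v => Complex.exp ((-2 * π * x * Complex.I) * v)) (.of_forall fun v => ?_)]
  swap
  · simp only [Set.indicator_apply, Pi.one_apply, smul_eq_mul, mul_ite, mul_one, mul_zero]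
    push_cast
    ring_nf
  rw [integral_indicator measurableSet_Icc,
    integral_Icc_eq_integral_Ioc, ← intervalIntegral.integral_of_le (by linarith)]
  rcases eq_or_ne (a * x) 0 with hax | hax
  · rcases mul_eq_zero.1 hax with rfl | rfl <;> simp
    ring
  obtain ⟨ha0, hx0⟩ := mul_ne_zero_iff.1 hax
  have hc : (-2 * π * x * Complex.I : ℂ) ≠ 0 := by simp [pi_ne_zero, hx0]
  rw [integral_exp_mul_complex hc, sinc_of_ne_zero (by simp [pi_ne_zero, ha0, hx0])]
  have hπ : (π : ℂ) ≠ 0 := by exact_mod_cast pi_ne_zero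
  have ha' : (a : ℂ) ≠ 0 := by exact_mod_cast ha0
  have hx' : (x : ℂ) ≠ 0 := by exact_mod_cast hx0
  push_cast
  rw [Complex.sin]
  field_simp
  rw [Complex.I_sq]
  ring

theorem integral_mul_sinc_of_support_fourier_subset {f : ℝ → ℂ} (hc : Continuous f)
    (hf : Integrable f) {a : ℝ} (ha : 0 ≤ a) (hsupp : Function.support (𝓕 f) ⊆ Set.Icc (-a) a) :
    ∫ x, f x * (2 * a * sinc (2 * π * a * x) : ℝ) = f 0 := by
  have hFf : Integrable (𝓕 f) :=
    (VectorFourier.fourierIntegral_continuous Real.continuous_fourierChar continuous_inner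
      hf).integrable_of_hasCompactSupport (.of_support_subset_isCompact isCompact_Icc hsupp)
  have hind : Integrable ((Set.Icc (-a) a).indicator (1 : ℝ → ℂ)) :=
    (integrableOn_const (by simp)).integrable_indicator measurableSet_Icc
  have hcut : ∀ ξ, 𝓕 f ξ * (Set.Icc (-a) a).indicator 1 ξ = 𝓕 f ξ := fun ξ ↦ by
    by_cases hξ : ξ ∈ Set.Icc (-a) a
    · simp [hξ]
    · simp [hξ, Function.notMem_support.1 (mt (@hsupp ξ) hξ)]
  calc ∫ x, f x * (2 * a * sinc (2 * π * a * x) : ℝ)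
      = ∫ x, f x * 𝓕 ((Set.Icc (-a) a).indicator (1 : ℝ → ℂ)) x := by
        simp_rw [fourier_indicator_Icc ha]
    _ = ∫ ξ, 𝓕 f ξ * (Set.Icc (-a) a).indicator 1 ξ :=
      (integral_fourier_mul_eq_integral_mul_fourier hf hind).symm
    _ = f 0 := by simp_rw [hcut]; exact hc.integral_fourier_eq hf hFf

theorem MeasureTheory.Integrable.mul_sinc_comp_mul {f : ℝ → ℂ} (hf : Integrable f) (c : ℝ) :
    Integrable fun x ↦ f x * (sinc (c * x) : ℂ) :=
  hf.mul_bdd (by fun_prop) (.of_forall fun x ↦ by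
    simpa only [Complex.norm_real, Real.norm_eq_abs] using abs_sinc_le_one (c * x))

theorem WSp_eq_one_sub_sinc (x : ℝ) : WSp x = 1 - sinc (2 * π * x) := by
  by_cases hx : x = 0
  · simp [WSp, hx]
  · rw [WSp, if_neg hx, sinc_of_ne_zero (by positivity)]

theorem integral_WSp_eq_general (φ : SchwartzMap ℝ ℂ)
    (hsupp : Function.support (𝓕 (fun x : ℝ => φ x)) ⊆ Set.Icc (-1) 1) :
    ∫ x : ℝ, φ x * (WSp x : ℂ) = (∫ x : ℝ, φ x) - φ 0 / 2 := by
  have hsinc : ∫ x, φ x * (sinc (2 * π * x) : ℂ) = φ 0 / 2 := by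
    have := integral_mul_sinc_of_support_fourier_subset φ.continuous φ.integrable zero_le_one hsupp
    rw [eq_div_iff two_ne_zero, ← this, ← integral_mul_const]
    congr 1 with x
    simp only [mul_one]
    push_cast
    ring
  calc ∫ x, φ x * (WSp x : ℂ)
      = ∫ x, (φ x - φ x * (sinc (2 * π * x) : ℂ)) := by
        simp_rw [WSp_eq_one_sub_sinc, Complex.ofReal_sub, Complex.ofReal_one, mul_sub, mul_one]
    _ = (∫ x, φ x) - φ 0 / 2 := by
      rw [integral_sub φ.integrable (φ.integrable.mul_sinc_comp_mul _), hsinc]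

/-- For an even Schwartz function `φ` with `φ̂` supported inside `[-1, 1]`,
`∫ φ(x) (1 - sin(2πx)/(2πx)) dx = ∫ φ(x) dx - φ(0)/2`; i.e. `W_Sp` agrees with
the distribution `1 - (1/2)δ₀` on such test functions. -/
theorem integral_WSp_eq (φ : SchwartzMap ℝ ℂ) (heven : ∀ x : ℝ, φ (-x) = φ x)
    (hsupp : Function.support (𝓕 (fun x : ℝ => φ x)) ⊆ Set.Icc (-1) 1) :
    ∫ x : ℝ, φ x * (WSp x : ℂ) = (∫ x : ℝ, φ x) - φ 0 / 2 :=
  integral_WSp_eq_general φ hsupp
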